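/- In the tree-recognition system, if G is an input tree and G ⇒*_𝓡 H, then the unique root node of H has no △-labelled children (a node u is a child of v if some edge has source v and target u). -/

import Mathlib

/-! # Rooted graph transformation with relabelling -/

/-- A graph over a label alphabet `(LV, LE)`: finite vertex and edge sets, total
source/target functions, a partial node-labelling function `l`, a total
edge-labelling function `m`, and a partial rootedness function `p`
(`some true` = root node, `some false` = non-root, `none` = undefined). -/
structure RGraph (LV LE : Type) : Type 1 where
  V : Type
  E : Type
  finV : Finite V
  finE : Finite E
  s : E → V
  t : E → V
  l : V → Option LV
  m : E → LE
  p : V → Option Bool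

namespace RGraph

variable {LV LE : Type}

def IsTotallyLabelled (G : RGraph LV LE) : Prop := ∀ v, (G.l v).isSome
def IsTotallyRooted (G : RGraph LV LE) : Prop := ∀ v, (G.p v).isSome
/-- totally labelled, totally rooted graph -/
def IsTLRG (G : RGraph LV LE) : Prop := G.IsTotallyLabelled ∧ G.IsTotallyRooted

/-- The number of root nodes `|p⁻¹({1})|`. -/
noncomputable def rootCount (G : RGraph LV LE) : ℕ := Nat.card {v : G.V // G.p v = some true}

/-- The degree of a node. -/
noncomputable def degree (G : RGraph LV LE) (v : G.V) : ℕ :=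
  Nat.card {e : G.E // G.s e = v} + Nat.card {e : G.E // G.t e = v}

end RGraph

/-- RGraph morphisms preserve sources, targets, edge labels, and node labels and
rootedness wherever these are defined. -/
structure Morphism {LV LE : Type} (G H : RGraph LV LE) : Type where
  fV : G.V → H.V
  fE : G.E → H.E
  src : ∀ e, fV (G.s e) = H.s (fE e)
  tgt : ∀ e, fV (G.t e) = H.t (fE e)
  edgeLabel : ∀ e, G.m e = H.m (fE e)
  nodeLabel : ∀ v x, G.l v = some x → H.l (fV v) = some x
  rootedness : ∀ v b, G.p v = some b → H.p (fV v) = some b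

namespace Morphism

variable {LV LE : Type} {G H K : RGraph LV LE}

def Injective (g : Morphism G H) : Prop := Function.Injective g.fV ∧ Function.Injective g.fE

/-- identity morphism -/
def ident (G : RGraph LV LE) : Morphism G G where
  fV := id
  fE := id
  src := fun _ => rfl
  tgt := fun _ => rfl
  edgeLabel := fun _ => rfl
  nodeLabel := fun _ _ h => h
  rootedness := fun _ _ h => h

/-- composition of morphisms -/
def comp (g : Morphism G H) (h : Morphism H K) : Morphism G K where
  fV := h.fV ∘ g.fV
  fE := h.fE ∘ g.fE
  src := fun e => by simp [Function.comp, g.src e, h.src (g.fE e)]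
  tgt := fun e => by simp [Function.comp, g.tgt e, h.tgt (g.fE e)]
  edgeLabel := fun e => by simp [Function.comp, ← h.edgeLabel (g.fE e), g.edgeLabel e]
  nodeLabel := fun v x hx => h.nodeLabel _ _ (g.nodeLabel v x hx)
  rootedness := fun v b hb => h.rootedness _ _ (g.rootedness v b hb)

end Morphism

/-- An isomorphism of graphs: a morphism with a two-sided inverse morphism. -/
structure Iso {LV LE : Type} (G H : RGraph LV LE) : Type where
  toMor : Morphism G H
  invMor : Morphism H G
  leftV : ∀ v, invMor.fV (toMor.fV v) = v
  leftE : ∀ e, invMor.fE (toMor.fE e) = e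
  rightV : ∀ v, toMor.fV (invMor.fV v) = v
  rightE : ∀ e, toMor.fE (invMor.fE e) = e

/-- A rule `⟨L ← K → R⟩`: graphs `L`, `K`, `R` together with inclusion
(injective) morphisms `K ↪ L` and `K ↪ R`.  (In the rooted relabelling setting
`L` and `R` are additionally required to be TLRGs; this requirement is stated
as a hypothesis where needed.) -/
structure Rule (LV LE : Type) : Type 1 where
  L : RGraph LV LE
  K : RGraph LV LE
  R : RGraph LV LE
  incL : Morphism K L
  incR : Morphism K R
  injL : incL.Injective
  injR : incR.Injective

namespace Rule

variable {LV LE : Type} (r : Rule LV LE) (G : RGraph LV LE)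

/-- The inverse rule `r⁻¹ = ⟨R ← K → L⟩`. -/
def inv (r : Rule LV LE) : Rule LV LE where
  L := r.R
  K := r.K
  R := r.L
  incL := r.incR
  incR := r.incL
  injL := r.injR
  injR := r.injL

/-- The dangling condition: no edge of `G ∖ g(L)` is incident to a node of `g(L ∖ K)`. -/
def Dangling (g : Morphism r.L G) : Prop :=
  ∀ e : G.E, (∀ e' : r.L.E, g.fE e' ≠ e) →
    ∀ v : r.L.V, (∀ k : r.K.V, r.incL.fV k ≠ v) →
      G.s e ≠ g.fV v ∧ G.t e ≠ g.fV v

/-- The match `g` is applicable: it is injective and satisfies the dangling condition. -/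
def Applicable (g : Morphism r.L G) : Prop := g.Injective ∧ r.Dangling G g

/-- the nodes `g(L ∖ K)` deleted by applying `r` via `g` -/
def DelV (g : Morphism r.L G) : Set G.V :=
  {x | ∃ v : r.L.V, (∀ k : r.K.V, r.incL.fV k ≠ v) ∧ g.fV v = x}

/-- the edges `g(L ∖ K)` deleted by applying `r` via `g` -/
def DelE (g : Morphism r.L G) : Set G.E :=
  {x | ∃ e : r.L.E, (∀ k : r.K.E, r.incL.fE k ≠ e) ∧ g.fE e = x}

theorem kept_incL {g : Morphism r.L G} (hinj : g.Injective) (k : r.K.V) :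
    g.fV (r.incL.fV k) ∉ r.DelV G g := by
  rintro ⟨v, hv, heq⟩
  exact hv k (hinj.1 heq).symm

theorem kept_src {g : Morphism r.L G} (h : r.Applicable G g) {e : G.E}
    (he : e ∉ r.DelE G g) : G.s e ∉ r.DelV G g := by
  rintro ⟨v, hv, heq⟩
  by_cases hc : ∃ e', g.fE e' = e
  · obtain ⟨e', rfl⟩ := hc
    by_cases hk : ∃ k, r.incL.fE k = e'
    · obtain ⟨k, rfl⟩ := hk
      have h1 : g.fV (r.L.s (r.incL.fE k)) = G.s (g.fE (r.incL.fE k)) := g.src _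
      have h2 : r.incL.fV (r.K.s k) = r.L.s (r.incL.fE k) := r.incL.src k
      have h3 : g.fV v = g.fV (r.incL.fV (r.K.s k)) := by rw [heq, h2, h1]
      exact hv _ (h.1.1 h3).symm
    · exact he ⟨e', fun k hk' => hk ⟨k, hk'⟩, rfl⟩
  · exact (h.2 e (fun e' he' => hc ⟨e', he'⟩) v hv).1 heq.symm

theorem kept_tgt {g : Morphism r.L G} (h : r.Applicable G g) {e : G.E}
    (he : e ∉ r.DelE G g) : G.t e ∉ r.DelV G g := by
  rintro ⟨v, hv, heq⟩
  by_cases hc : ∃ e', g.fE e' = e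
  · obtain ⟨e', rfl⟩ := hc
    by_cases hk : ∃ k, r.incL.fE k = e'
    · obtain ⟨k, rfl⟩ := hk
      have h1 : g.fV (r.L.t (r.incL.fE k)) = G.t (g.fE (r.incL.fE k)) := g.tgt _
      have h2 : r.incL.fV (r.K.t k) = r.L.t (r.incL.fE k) := r.incL.tgt k
      have h3 : g.fV v = g.fV (r.incL.fV (r.K.t k)) := by rw [heq, h2, h1]
      exact hv _ (h.1.1 h3).symm
    · exact he ⟨e', fun k hk' => hk ⟨k, hk'⟩, rfl⟩
  · exact (h.2 e (fun e' he' => hc ⟨e', he'⟩) v hv).2 heq.symm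

attribute [local instance] Classical.propDecidable

/-- The result graph of applying `r` to `G` via an applicable match `g`:
delete `g(L ∖ K)` (undefining labels/rootedness of images of interface nodes
where they are undefined in `K`), then add `R ∖ K` disjointly, relabelling
(and re-rooting) the images of interface nodes according to `R`. -/
noncomputable def result (g : Morphism r.L G) (h : r.Applicable G g) : RGraph LV LE where
  V := {x : G.V // x ∉ r.DelV G g} ⊕ {v : r.R.V // ∀ k, r.incR.fV k ≠ v}
  E := {x : G.E // x ∉ r.DelE G g} ⊕ {e : r.R.E // ∀ k, r.incR.fE k ≠ e}
  finV := by
    haveI := G.finV; haveI := r.R.finV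
    infer_instance
  finE := by
    haveI := G.finE; haveI := r.R.finE
    infer_instance
  s := fun e =>
    match e with
    | Sum.inl x => Sum.inl ⟨G.s x.1, r.kept_src G h x.2⟩
    | Sum.inr x =>
        if hk : ∃ k, r.incR.fV k = r.R.s x.1 then
          Sum.inl ⟨g.fV (r.incL.fV hk.choose), r.kept_incL G h.1 _⟩
        else Sum.inr ⟨r.R.s x.1, fun k hk' => hk ⟨k, hk'⟩⟩
  t := fun e =>
    match e with
    | Sum.inl x => Sum.inl ⟨G.t x.1, r.kept_tgt G h x.2⟩
    | Sum.inr x =>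
        if hk : ∃ k, r.incR.fV k = r.R.t x.1 then
          Sum.inl ⟨g.fV (r.incL.fV hk.choose), r.kept_incL G h.1 _⟩
        else Sum.inr ⟨r.R.t x.1, fun k hk' => hk ⟨k, hk'⟩⟩
  l := fun v =>
    match v with
    | Sum.inl x =>
        if hk : ∃ k : r.K.V, r.K.l k = none ∧ g.fV (r.incL.fV k) = x.1 then
          r.R.l (r.incR.fV hk.choose)
        else G.l x.1
    | Sum.inr v => r.R.l v.1
  m := fun e =>
    match e with
    | Sum.inl x => G.m x.1
    | Sum.inr x => r.R.m x.1
  p := fun v =>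
    match v with
    | Sum.inl x =>
        if hk : ∃ k : r.K.V, r.K.p k = none ∧ g.fV (r.incL.fV k) = x.1 then
          r.R.p (r.incR.fV hk.choose)
        else G.p x.1
    | Sum.inr v => r.R.p v.1

/-- Direct derivation `G ⇒_r M`: there is an applicable match `g` such that `M`
is isomorphic to the result of applying `r` to `G` via `g`. -/
def Deriv (r : Rule LV LE) (G M : RGraph LV LE) : Prop :=
  ∃ (g : Morphism r.L G) (h : r.Applicable G g), Nonempty (Iso (r.result G g h) M)

end Rule

/-- `G ⇒_𝓡 H` for a set of rules. -/
def GTStep {LV LE : Type} (Rs : Set (Rule LV LE)) (G H : RGraph LV LE) : Prop :=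
  ∃ r ∈ Rs, r.Deriv G H

/-- `G ⇒*_𝓡 H`: the reflexive-transitive closure of `⇒_𝓡`, up to isomorphism. -/
def GTDerivStar {LV LE : Type} (Rs : Set (Rule LV LE)) (G H : RGraph LV LE) : Prop :=
  Relation.ReflTransGen (GTStep Rs) G H ∨ Nonempty (Iso G H)
/-! ## The tree-recognition system -/

/-- node labels: `□` (square) and `△` (triangle) -/
inductive NodeLab : Type where
  | square : NodeLab
  | tri : NodeLab
deriving DecidableEq

/-- `L` of rule `r0`: `v1 --□--> v2`, both `□`-labelled, `v1` unrooted, `v2` rooted. -/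
abbrev L0 : RGraph NodeLab Unit where
  V := Fin 2
  E := Unit
  finV := inferInstance
  finE := inferInstance
  s := fun _ => 0
  t := fun _ => 1
  l := fun _ => some .square
  m := fun _ => ()
  p := ![some false, some true]

/-- `K` of rules `r0` and `r1`: the single node `v1`, unlabelled, rootedness undefined. -/
abbrev K0 : RGraph NodeLab Unit where
  V := Unit
  E := PEmpty
  finV := inferInstance
  finE := inferInstance
  s := PEmpty.elim
  t := PEmpty.elim
  l := fun _ => none
  m := PEmpty.elim
  p := fun _ => none

/-- `R` of rules `r0` and `r1`: the single node `v1`, labelled `□`, rooted. -/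
abbrev R0 : RGraph NodeLab Unit where
  V := Unit
  E := PEmpty
  finV := inferInstance
  finE := inferInstance
  s := PEmpty.elim
  t := PEmpty.elim
  l := fun _ => some .square
  m := PEmpty.elim
  p := fun _ => some true

def incL0 : Morphism K0 L0 where
  fV := fun _ => 0
  fE := PEmpty.elim
  src := fun e => e.elim
  tgt := fun e => e.elim
  edgeLabel := fun e => e.elim
  nodeLabel := fun _ _ h => nomatch h
  rootedness := fun _ _ h => nomatch h

def incR0 : Morphism K0 R0 where
  fV := id
  fE := PEmpty.elim
  src := fun e => e.elim
  tgt := fun e => e.elim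
  edgeLabel := fun e => e.elim
  nodeLabel := fun _ _ h => nomatch h
  rootedness := fun _ _ h => nomatch h

/-- rule `r0`: prune a rooted `□`-leaf with unrooted `□`-parent, root moves to the parent -/
def r0 : Rule NodeLab Unit where
  L := L0
  K := K0
  R := R0
  incL := incL0
  incR := incR0
  injL := ⟨Function.injective_of_subsingleton _, Function.injective_of_subsingleton _⟩
  injR := ⟨Function.injective_of_subsingleton _, Function.injective_of_subsingleton _⟩

/-- `L` of rule `r1`: like `L0` but `v1` is labelled `△`. -/
abbrev L1 : RGraph NodeLab Unit where
  V := Fin 2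
  E := Unit
  finV := inferInstance
  finE := inferInstance
  s := fun _ => 0
  t := fun _ => 1
  l := ![some .tri, some .square]
  m := fun _ => ()
  p := ![some false, some true]

def incL1 : Morphism K0 L1 where
  fV := fun _ => 0
  fE := PEmpty.elim
  src := fun e => e.elim
  tgt := fun e => e.elim
  edgeLabel := fun e => e.elim
  nodeLabel := fun _ _ h => nomatch h
  rootedness := fun _ _ h => nomatch h

/-- rule `r1`: prune a rooted `□`-leaf with unrooted `△`-parent, root moves to the
parent which becomes `□`-labelled -/
def r1 : Rule NodeLab Unit where
  L := L1
  K := K0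
  R := R0
  incL := incL1
  incR := incR0
  injL := ⟨Function.injective_of_subsingleton _, Function.injective_of_subsingleton _⟩
  injR := ⟨Function.injective_of_subsingleton _, Function.injective_of_subsingleton _⟩

/-- `L` of rule `r2`: `v1 --□--> v2`, both `□`-labelled, `v1` rooted, `v2` unrooted. -/
abbrev L2 : RGraph NodeLab Unit where
  V := Fin 2
  E := Unit
  finV := inferInstance
  finE := inferInstance
  s := fun _ => 0
  t := fun _ => 1
  l := fun _ => some .square
  m := fun _ => ()
  p := ![some true, some false]

/-- `K` of rule `r2`: nodes `v1, v2`, unlabelled, rootedness undefined, no edges. -/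
abbrev K2 : RGraph NodeLab Unit where
  V := Fin 2
  E := PEmpty
  finV := inferInstance
  finE := inferInstance
  s := PEmpty.elim
  t := PEmpty.elim
  l := fun _ => none
  m := PEmpty.elim
  p := fun _ => none

/-- `R` of rule `r2`: `v1 --□--> v2`, `v1` labelled `△` and unrooted, `v2` labelled `□`
and rooted. -/
abbrev R2 : RGraph NodeLab Unit where
  V := Fin 2
  E := Unit
  finV := inferInstance
  finE := inferInstance
  s := fun _ => 0
  t := fun _ => 1
  l := ![some .tri, some .square]
  m := fun _ => ()
  p := ![some false, some true]

def incL2 : Morphism K2 L2 where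
  fV := id
  fE := PEmpty.elim
  src := fun e => e.elim
  tgt := fun e => e.elim
  edgeLabel := fun e => e.elim
  nodeLabel := fun _ _ h => nomatch h
  rootedness := fun _ _ h => nomatch h

def incR2 : Morphism K2 R2 where
  fV := id
  fE := PEmpty.elim
  src := fun e => e.elim
  tgt := fun e => e.elim
  edgeLabel := fun e => e.elim
  nodeLabel := fun _ _ h => nomatch h
  rootedness := fun _ _ h => nomatch h

/-- rule `r2`: push the root one step down an edge, marking the old position `△` -/
def r2 : Rule NodeLab Unit where
  L := L2
  K := K2
  R := R2
  incL := incL2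
  incR := incR2
  injL := ⟨Function.injective_id, Function.injective_of_subsingleton _⟩
  injR := ⟨Function.injective_id, Function.injective_of_subsingleton _⟩

/-- the rule set of the tree-recognition system -/
def TreeRules : Set (Rule NodeLab Unit) := {r0, r1, r2}

/-! ## Trees -/

/-- `IsUndirWalk G v l w`: `l` is an undirected walk from `v` to `w` in `G`;
each step is an edge together with a boolean telling in which direction it is
traversed. -/
def IsUndirWalk {LV LE : Type} (G : RGraph LV LE) : G.V → List (G.E × Bool) → G.V → Prop
  | v, [], w => v = w
  | v, (e, true) :: rest, w => G.s e = v ∧ IsUndirWalk G (G.t e) rest w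
  | v, (e, false) :: rest, w => G.t e = v ∧ IsUndirWalk G (G.s e) rest w

/-- connectedness via undirected walks -/
def IsConnectedGraph {LV LE : Type} (G : RGraph LV LE) : Prop :=
  ∀ v w : G.V, ∃ l, IsUndirWalk G v l w

/-- an undirected cycle: a non-empty closed undirected walk without repeated edges -/
def HasUndirCycle {LV LE : Type} (G : RGraph LV LE) : Prop :=
  ∃ (v : G.V) (l : List (G.E × Bool)), l ≠ [] ∧ IsUndirWalk G v l v ∧ (l.map Prod.fst).Nodup

/-- a tree: non-empty, connected, no undirected cycles, and every node has at
most one incoming edge -/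
def IsTree {LV LE : Type} (G : RGraph LV LE) : Prop :=
  Nonempty G.V ∧ IsConnectedGraph G ∧ ¬ HasUndirCycle G ∧
    ∀ v : G.V, Nat.card {e : G.E // G.t e = v} ≤ 1

/-- an input graph: a TLRG with exactly one root node, all nodes labelled `□`
(all edges are `□`-labelled since `Unit` is the edge alphabet) -/
def IsInputGraph (G : RGraph NodeLab Unit) : Prop :=
  G.IsTLRG ∧ (∀ v, G.l v = some .square) ∧ G.rootCount = 1

/-- no rule of `Rs` is applicable to `H` -/
def InNormalForm {LV LE : Type} (Rs : Set (Rule LV LE)) (H : RGraph LV LE) : Prop :=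
  ¬ ∃ r ∈ Rs, ∃ g : Morphism r.L H, r.Applicable H g

/-!
Along a derivation from an input tree the following invariant holds: there is at most one root,
there is no directed cycle, and from every `△`-node a path leaving only `△`-nodes leads to the
root. An input tree has no `△`-node, and a shortest closed directed walk in it would be an
undirected cycle. Rules `r0` and `r1` delete the root leaf and make its parent the root, so a
`△`-path to the old root is cut short where it first meets the parent; rule `r2` marks the old
root `△` and moves the root along an edge that stays, so `△`-paths are extended by that edge.
Neither kind of step creates a directed cycle. With the invariant, a `△`-child of the root would
lead back to the root, closing a directed cycle.
-/

open Relation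

namespace RGraph

variable {LV LE : Type} {G H : RGraph LV LE}

def Adj (G : RGraph LV LE) (u v : G.V) : Prop := ∃ e, G.s e = u ∧ G.t e = v

def LabelledAdj (G : RGraph LV LE) (c : LV) (u v : G.V) : Prop := G.l u = some c ∧ G.Adj u v

def Acyclic (G : RGraph LV LE) : Prop := ∀ v, ¬ TransGen G.Adj v v

theorem Acyclic.of_adj_map (hH : H.Acyclic) (f : G.V → H.V)
    (hf : ∀ u v, G.Adj u v → H.Adj (f u) (f v)) : G.Acyclic :=
  fun v hv => hH (f v) (hv.lift f hf)

end RGraph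

namespace Morphism

variable {LV LE : Type} {G H : RGraph LV LE}

theorem adj (f : Morphism G H) {u v : G.V} (h : G.Adj u v) : H.Adj (f.fV u) (f.fV v) :=
  let ⟨e, hs, ht⟩ := h
  ⟨f.fE e, by rw [← f.src, hs], by rw [← f.tgt, ht]⟩

theorem labelledAdj (f : Morphism G H) {c : LV} {u v : G.V} (h : G.LabelledAdj c u v) :
    H.LabelledAdj c (f.fV u) (f.fV v) :=
  ⟨f.nodeLabel u c h.1, f.adj h.2⟩

end Morphism

section Walks

variable {LV LE : Type} {G : RGraph LV LE}

theorem isUndirWalk_append {u w : G.V} {l₁ l₂ : List (G.E × Bool)} :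
    IsUndirWalk G u (l₁ ++ l₂) w ↔ ∃ v, IsUndirWalk G u l₁ v ∧ IsUndirWalk G v l₂ w := by
  induction l₁ generalizing u with
  | nil => simp [IsUndirWalk]
  | cons x l ih => obtain ⟨e, _ | _⟩ := x <;> simp [IsUndirWalk, ih, and_assoc]

theorem exists_isUndirWalk_of_transGen {u v : G.V} (h : TransGen G.Adj u v) :
    ∃ l : List G.E, l ≠ [] ∧ IsUndirWalk G u (l.map (·, true)) v := by
  induction h with
  | single huv =>
    obtain ⟨e, hs, ht⟩ := huv
    exact ⟨[e], by simp, hs, ht⟩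
  | tail _ hvw ih =>
    obtain ⟨l, hl, hw⟩ := ih
    obtain ⟨e, hs, ht⟩ := hvw
    exact ⟨l ++ [e], by simp, by simpa [isUndirWalk_append] using ⟨_, hw, hs, ht⟩⟩

/-- A shortest closed directed walk repeats no edge: a repeated edge `e` would cut out a shorter
closed walk starting with `e`. -/
theorem hasUndirCycle_of_closed_walk {v : G.V} {l : List G.E} (hl : l ≠ [])
    (hw : IsUndirWalk G v (l.map (·, true)) v) : HasUndirCycle G := by
  induction hn : l.length using Nat.strong_induction_on generalizing v l with
  | _ n ih =>
  by_cases hnd : l.Nodup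
  · exact ⟨v, _, by simpa using hl, hw, by simpa [List.map_map, Function.comp_def] using hnd⟩
  obtain ⟨e, he⟩ := not_forall_not.mp (mt List.nodup_iff_sublist.mpr hnd)
  obtain ⟨r₁, r₂, rfl, he₁, he₂⟩ := List.cons_sublist_iff.mp he
  obtain ⟨p, q, rfl⟩ := List.append_of_mem he₁
  obtain ⟨u, w, rfl⟩ := List.append_of_mem (List.singleton_sublist.mp he₂)
  simp only [List.map_append, List.map_cons, isUndirWalk_append, IsUndirWalk] at hw
  obtain ⟨x, ⟨-, -, -, hq⟩, -, hu, rfl, -⟩ := hw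
  refine ih (e :: (q ++ u)).length (by subst hn; simp; omega) (v := G.s e) (l := e :: (q ++ u))
    (by simp) ⟨rfl, ?_⟩ rfl
  rw [List.map_append, isUndirWalk_append]
  exact ⟨x, hq, hu⟩

theorem acyclic_of_not_hasUndirCycle (h : ¬ HasUndirCycle G) : G.Acyclic := fun _ hv =>
  let ⟨_, hl, hw⟩ := exists_isUndirWalk_of_transGen hv
  h (hasUndirCycle_of_closed_walk hl hw)

end Walks

namespace Rule

variable {LV LE : Type} {r : Rule LV LE} {G : RGraph LV LE} {g : Morphism r.L G}

theorem result_l_of_forall_ne (h : r.Applicable G g) {x : {x : G.V // x ∉ r.DelV G g}}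
    (hx : ∀ k, r.K.l k = none → g.fV (r.incL.fV k) ≠ x.1) :
    (r.result G g h).l (.inl x) = G.l x.1 :=
  dif_neg fun ⟨k, hk, hkx⟩ => hx k hk hkx

theorem result_p_of_forall_ne (h : r.Applicable G g) {x : {x : G.V // x ∉ r.DelV G g}}
    (hx : ∀ k, r.K.p k = none → g.fV (r.incL.fV k) ≠ x.1) :
    (r.result G g h).p (.inl x) = G.p x.1 :=
  dif_neg fun ⟨k, hk, hkx⟩ => hx k hk hkx

theorem result_l_incL (h : r.Applicable G g) {k : r.K.V} (hk : r.K.l k = none) :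
    (r.result G g h).l (.inl ⟨g.fV (r.incL.fV k), r.kept_incL G h.1 k⟩) = r.R.l (r.incR.fV k) := by
  have hex : ∃ k', r.K.l k' = none ∧ g.fV (r.incL.fV k') = g.fV (r.incL.fV k) := ⟨k, hk, rfl⟩
  have hchoose : hex.choose = k := r.injL.1 (h.1.1 hex.choose_spec.2)
  exact (dif_pos hex).trans (by rw [hchoose])

theorem result_p_incL (h : r.Applicable G g) {k : r.K.V} (hk : r.K.p k = none) :
    (r.result G g h).p (.inl ⟨g.fV (r.incL.fV k), r.kept_incL G h.1 k⟩) = r.R.p (r.incR.fV k) := by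
  have hex : ∃ k', r.K.p k' = none ∧ g.fV (r.incL.fV k') = g.fV (r.incL.fV k) := ⟨k, hk, rfl⟩
  have hchoose : hex.choose = k := r.injL.1 (h.1.1 hex.choose_spec.2)
  exact (dif_pos hex).trans (by rw [hchoose])

theorem result_s_inr (h : r.Applicable G g) {e : {e : r.R.E // ∀ k, r.incR.fE k ≠ e}} {k : r.K.V}
    (hk : r.incR.fV k = r.R.s e.1) :
    (r.result G g h).s (.inr e) = .inl ⟨g.fV (r.incL.fV k), r.kept_incL G h.1 k⟩ := by
  have hex : ∃ k', r.incR.fV k' = r.R.s e.1 := ⟨k, hk⟩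
  have hchoose : hex.choose = k := r.injR.1 (hex.choose_spec.trans hk.symm)
  exact (dif_pos hex).trans
    (congrArg Sum.inl (Subtype.ext (congrArg (fun k => g.fV (r.incL.fV k)) hchoose)))

theorem result_t_inr (h : r.Applicable G g) {e : {e : r.R.E // ∀ k, r.incR.fE k ≠ e}} {k : r.K.V}
    (hk : r.incR.fV k = r.R.t e.1) :
    (r.result G g h).t (.inr e) = .inl ⟨g.fV (r.incL.fV k), r.kept_incL G h.1 k⟩ := by
  have hex : ∃ k', r.incR.fV k' = r.R.t e.1 := ⟨k, hk⟩
  have hchoose : hex.choose = k := r.injR.1 (hex.choose_spec.trans hk.symm)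
  exact (dif_pos hex).trans
    (congrArg Sum.inl (Subtype.ext (congrArg (fun k => g.fV (r.incL.fV k)) hchoose)))

theorem exists_incL_eq_src_of_mem_DelE {e : G.E} (he : e ∈ r.DelE G g)
    (hs : G.s e ∉ r.DelV G g) : ∃ k, g.fV (r.incL.fV k) = G.s e := by
  obtain ⟨e', -, rfl⟩ := he
  by_contra! hk
  refine hs ⟨r.L.s e', fun k hk' => hk k ?_, g.src e'⟩
  rw [hk', g.src]

theorem labelledAdj_result_inl (h : r.Applicable G g) {c : LV} {x : {x : G.V // x ∉ r.DelV G g}}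
    (hx : ∀ k, r.K.l k = none → g.fV (r.incL.fV k) ≠ x.1) (hc : G.l x.1 = some c) {e : G.E}
    (hs : G.s e = x.1) (he : e ∉ r.DelE G g) :
    (r.result G g h).LabelledAdj c (.inl x) (.inl ⟨G.t e, r.kept_tgt G h he⟩) :=
  ⟨(result_l_of_forall_ne h hx).trans hc, .inl ⟨e, he⟩, congrArg Sum.inl (Subtype.ext hs), rfl⟩

/-- A path of `c`-labelled steps in `G` survives in the result up to the first node where it
meets the interface: before that point none of its nodes is relabelled and none of its edges is
deleted. -/
theorem reflTransGen_labelledAdj_result (h : r.Applicable G g) {c : LV} {b : G.V}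
    {T : (r.result G g h).V}
    (hinterface : ∀ k, ReflTransGen ((r.result G g h).LabelledAdj c)
      (.inl ⟨g.fV (r.incL.fV k), r.kept_incL G h.1 k⟩) T)
    (hend : ∀ hb : b ∉ r.DelV G g, ReflTransGen ((r.result G g h).LabelledAdj c) (.inl ⟨b, hb⟩) T)
    {y : G.V} (hyb : ReflTransGen (G.LabelledAdj c) y b) (hy : y ∉ r.DelV G g) :
    ReflTransGen ((r.result G g h).LabelledAdj c) (.inl ⟨y, hy⟩) T := by
  induction hyb using ReflTransGen.head_induction_on with
  | refl => exact hend hy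
  | head hstep _ ih =>
    obtain ⟨hc, e, rfl, rfl⟩ := hstep
    by_cases hk : ∃ k, g.fV (r.incL.fV k) = G.s e
    · obtain ⟨k, hk⟩ := hk
      rw [show (⟨G.s e, hy⟩ : {x // x ∉ r.DelV G g}) = ⟨_, r.kept_incL G h.1 k⟩ from
        Subtype.ext hk.symm]
      exact hinterface k
    · simp only [not_exists] at hk
      have he : e ∉ r.DelE G g := fun he => (exists_incL_eq_src_of_mem_DelE he hy).elim hk
      exact .head (labelledAdj_result_inl h (fun k _ => hk k) hc rfl he) (ih (r.kept_tgt G h he))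

theorem isEmpty_newVertices (hV : Function.Surjective r.incR.fV) :
    IsEmpty {v : r.R.V // ∀ k, r.incR.fV k ≠ v} :=
  ⟨fun v => let ⟨k, hk⟩ := hV v.1; v.2 k hk⟩

def keptVertex (h : r.Applicable G g) (hV : Function.Surjective r.incR.fV) :
    (r.result G g h).V → G.V :=
  Sum.elim Subtype.val fun v => (isEmpty_newVertices hV).elim v

theorem acyclic_result (h : r.Applicable G g) (hV : Function.Surjective r.incR.fV)
    (hnew : ∀ (e : {e : r.R.E // ∀ k, r.incR.fE k ≠ e}) (ks kt : r.K.V),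
      r.incR.fV ks = r.R.s e.1 → r.incR.fV kt = r.R.t e.1 →
        G.Adj (g.fV (r.incL.fV ks)) (g.fV (r.incL.fV kt)))
    (hG : G.Acyclic) : (r.result G g h).Acyclic := by
  refine hG.of_adj_map (keptVertex h hV) ?_
  rintro _ _ ⟨e | e, rfl, rfl⟩
  · exact ⟨e.1, rfl, rfl⟩
  · obtain ⟨ks, hks⟩ := hV (r.R.s e.1)
    obtain ⟨kt, hkt⟩ := hV (r.R.t e.1)
    rw [result_s_inr h hks, result_t_inr h hkt]
    exact hnew e ks kt hks hkt

end Rule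

namespace RGraph

variable {LV LE : Type} {G H : RGraph LV LE} {c : LV}

structure TrailToRoot (G : RGraph LV LE) (c : LV) : Prop where
  roots_subsingleton : {v | G.p v = some true}.Subsingleton
  acyclic : G.Acyclic
  reaches_root : ∀ v, G.l v = some c → ∃ w, G.p w = some true ∧ ReflTransGen (G.LabelledAdj c) v w

theorem TrailToRoot.root_not_adj (hI : G.TrailToRoot c) :
    ∀ v : G.V, G.p v = some true → ¬ ∃ e : G.E, G.s e = v ∧ G.l (G.t e) = some c := by
  rintro _ hv ⟨e, rfl, he⟩
  obtain ⟨w, hw, hpath⟩ := hI.reaches_root _ he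
  obtain rfl := hI.roots_subsingleton hw hv
  exact hI.acyclic _ (.head' ⟨e, rfl, rfl⟩ (ReflTransGen.mono (fun _ _ h => h.2) _ _ hpath))

theorem TrailToRoot.of_iso (hI : G.TrailToRoot c) (i : Iso G H) : H.TrailToRoot c where
  roots_subsingleton u hu v hv := by
    rw [← i.rightV u, ← i.rightV v,
      hI.roots_subsingleton (i.invMor.rootedness _ _ hu) (i.invMor.rootedness _ _ hv)]
  acyclic := hI.acyclic.of_adj_map i.invMor.fV fun _ _ => i.invMor.adj
  reaches_root v hv := by
    obtain ⟨w, hw, hpath⟩ := hI.reaches_root _ (i.invMor.nodeLabel _ _ hv)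
    refine ⟨i.toMor.fV w, i.toMor.rootedness _ _ hw, ?_⟩
    simpa only [Function.onFun, i.rightV] using
      hpath.lift i.toMor.fV fun _ _ => i.toMor.labelledAdj

/-- `r0` and `r1` have this shape: they delete the root `b`, make the image of their only interface
node `k₀` the root, and add no nodes or edges. -/
theorem TrailToRoot.result_of_prune {r : Rule LV LE} {g : Morphism r.L G}
    (hI : G.TrailToRoot c) (h : r.Applicable G g)
    (hV : Function.Surjective r.incR.fV) (hE : Function.Surjective r.incR.fE)
    {k₀ : r.K.V} (hk₀ : ∀ k, k = k₀) (hpk₀ : r.K.p k₀ = none)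
    (hRk₀ : r.R.p (r.incR.fV k₀) = some true)
    {b : G.V} (hb : b ∈ r.DelV G g) (hpb : G.p b = some true) :
    (r.result G g h).TrailToRoot c := by
  have := r.isEmpty_newVertices hV
  set a : (r.result G g h).V := .inl ⟨g.fV (r.incL.fV k₀), r.kept_incL G h.1 k₀⟩
  have ha : (r.result G g h).p a = some true := (Rule.result_p_incL h hpk₀).trans hRk₀
  have hoff : ∀ {x : {x // x ∉ r.DelV G g}}, Sum.inl x ≠ a → ∀ k, g.fV (r.incL.fV k) ≠ x.1 :=
    fun hxa k hkx => hxa (congrArg Sum.inl (Subtype.ext (by rw [← hkx, hk₀ k])))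
  have hroot : ∀ v, (r.result G g h).p v = some true → v = a := by
    rintro (x | v) hx
    · by_contra hxa
      rw [Rule.result_p_of_forall_ne h fun k _ => hoff hxa k] at hx
      exact x.2 (hI.roots_subsingleton hx hpb ▸ hb)
    · exact isEmptyElim v
  refine ⟨Set.subsingleton_of_forall_eq a hroot,
    Rule.acyclic_result h hV (fun e => (let ⟨k, hk⟩ := hE e.1; e.2 k hk).elim) hI.acyclic, ?_⟩
  rintro (x | v) hx
  · by_cases hxa : Sum.inl x = a
    · exact ⟨a, ha, hxa ▸ .refl⟩
    rw [Rule.result_l_of_forall_ne h fun k _ => hoff hxa k] at hx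
    obtain ⟨w, hw, hpath⟩ := hI.reaches_root _ hx
    obtain rfl := hI.roots_subsingleton hw hpb
    exact ⟨a, ha, Rule.reflTransGen_labelledAdj_result h (fun k => hk₀ k ▸ .refl)
      (fun hb' => absurd hb hb') hpath x.2⟩
  · exact isEmptyElim v

theorem trailToRoot_of_isInputGraph {G : RGraph NodeLab Unit} (hG : IsInputGraph G)
    (hT : IsTree G) : G.TrailToRoot .tri where
  roots_subsingleton := (Set.subsingleton_coe _).mp (Nat.card_eq_one_iff_unique.mp hG.2.2).1
  acyclic := acyclic_of_not_hasUndirCycle hT.2.2.1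
  reaches_root v hv := by simp [hG.2.1 v] at hv

theorem TrailToRoot.result_r2 {G : RGraph NodeLab Unit} {g : Morphism r2.L G}
    (hI : G.TrailToRoot .tri) (h : r2.Applicable G g) : (r2.result G g h).TrailToRoot .tri := by
  set M := r2.result G g h
  set a : M.V := .inl ⟨g.fV (r2.incL.fV (0 : Fin 2)), r2.kept_incL G h.1 (0 : Fin 2)⟩
  set b : M.V := .inl ⟨g.fV (r2.incL.fV (1 : Fin 2)), r2.kept_incL G h.1 (1 : Fin 2)⟩
  have hpa : M.p a = some false := Rule.result_p_incL h rfl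
  have hpb : M.p b = some true := Rule.result_p_incL h rfl
  have hGroot : G.p (g.fV (0 : Fin 2)) = some true := g.rootedness (0 : Fin 2) true rfl
  have hab : M.LabelledAdj .tri a b :=
    ⟨Rule.result_l_incL h rfl, .inr ⟨(), fun k => k.elim⟩,
      Rule.result_s_inr h (k := (0 : Fin 2)) rfl, Rule.result_t_inr h (k := (1 : Fin 2)) rfl⟩
  have hoff : ∀ {x : {x // x ∉ r2.DelV G g}}, Sum.inl x ≠ a → Sum.inl x ≠ b →
      ∀ k : Fin 2, g.fV k ≠ x.1 := fun hxa hxb => Fin.forall_fin_two.mpr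
    ⟨fun hx => hxa (congrArg Sum.inl (Subtype.ext hx.symm)),
      fun hx => hxb (congrArg Sum.inl (Subtype.ext hx.symm))⟩
  have hroot : ∀ v, M.p v = some true → v = b := by
    rintro (x | ⟨v, hv⟩) hx
    · by_contra hxb
      by_cases hxa : Sum.inl x = a
      · simp [hxa, hpa] at hx
      rw [Rule.result_p_of_forall_ne h fun k _ => hoff hxa hxb k] at hx
      exact hxa (congrArg Sum.inl (Subtype.ext (hI.roots_subsingleton hx hGroot)))
    · exact (hv v rfl).elim
  refine ⟨Set.subsingleton_of_forall_eq b hroot, ?_, ?_⟩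
  · refine Rule.acyclic_result h (fun v => ⟨v, rfl⟩) ?_ hI.acyclic
    rintro e ks kt (rfl : ks = (0 : Fin 2)) (rfl : kt = (1 : Fin 2))
    exact ⟨g.fE (), (g.src ()).symm, (g.tgt ()).symm⟩
  rintro (x | ⟨v, hv⟩) hx
  · by_cases hxb : Sum.inl x = b
    · exact ⟨b, hpb, hxb ▸ .refl⟩
    by_cases hxa : Sum.inl x = a
    · exact ⟨b, hpb, hxa ▸ .single hab⟩
    rw [Rule.result_l_of_forall_ne h fun k _ => hoff hxa hxb k] at hx
    obtain ⟨w, hw, hpath⟩ := hI.reaches_root _ hx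
    obtain rfl := hI.roots_subsingleton hw hGroot
    exact ⟨b, hpb, Rule.reflTransGen_labelledAdj_result h
      (Fin.forall_fin_two.mpr ⟨.single hab, .refl⟩) (fun _ => .single hab) hpath x.2⟩
  · exact (hv v rfl).elim

theorem TrailToRoot.of_gtStep {G H : RGraph NodeLab Unit} (hI : G.TrailToRoot .tri)
    (hs : GTStep TreeRules G H) : H.TrailToRoot .tri := by
  obtain ⟨r, hr, g, h, hi⟩ := hs
  refine TrailToRoot.of_iso ?_ hi.some
  rcases hr with rfl | rfl | rfl
  iterate 2
    exact hI.result_of_prune h (fun v => ⟨v, rfl⟩) (fun e => e.elim) (k₀ := ()) (fun _ => rfl)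
      rfl rfl (b := g.fV (1 : Fin 2)) ⟨(1 : Fin 2), fun _ => Fin.zero_ne_one, rfl⟩
      (g.rootedness (1 : Fin 2) true rfl)
  exact hI.result_r2 h

theorem TrailToRoot.of_gtDerivStar {G H : RGraph NodeLab Unit} (hI : G.TrailToRoot .tri)
    (hd : GTDerivStar TreeRules G H) : H.TrailToRoot .tri := by
  rcases hd with hd | hi
  · induction hd with
    | refl => exact hI
    | tail _ hs ih => exact ih.of_gtStep hs
  · exact hI.of_iso hi.some

end RGraph

/-- If `G` is an input tree and `G ⇒*_𝓡 H`, then the (unique) root node of `H`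
has no `△`-labelled children. -/
theorem root_has_no_triangle_child (G H : RGraph NodeLab Unit)
    (hG : IsInputGraph G) (hGtree : IsTree G)
    (hd : GTDerivStar TreeRules G H) :
    ∀ v : H.V, H.p v = some true →
      ¬ ∃ e : H.E, H.s e = v ∧ H.l (H.t e) = some .tri :=
  ((RGraph.trailToRoot_of_isInputGraph hG hGtree).of_gtDerivStar hd).root_not_adj
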